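/- Let X and X' be samples of size n differing in one element, D(X,t) the paired empirical CDF of h, and d_δ(·) the empirical (1−δ)-quantile. If h is a continuous random variable with positive density at its (1−δ)-quantile h_δ > 0, then d_δ(X)/d_δ(X') ≤ 1 + O_P(n^{-1/2}); in particular, for any γ_2 > 0 there exist constants and N such that for n ≥ N, P(d_δ(X) ≤ e^{β_n} d_δ(X')) ≥ 1 − γ_2 with β_n = O(n^{-1/2}). -/

import Mathlib

open MeasureTheory

/-- The paired empirical CDF based on a sample of size `2m`. -/
noncomputable def Demp {𝒳 : Type*} (h : 𝒳 → 𝒳 → ℝ) (m : ℕ)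
    (X : Fin (2 * m) → 𝒳) (t : ℝ) : ℝ :=
  (2 / (2 * m : ℝ)) *
    ((Finset.univ.filter fun i : Fin m =>
        h (X ⟨i.1, by have := i.isLt; omega⟩) (X ⟨i.1 + m, by have := i.isLt; omega⟩) ≤ t).card : ℝ)

/-- The empirical `(1-δ)`-quantile of the paired empirical CDF. -/
noncomputable def dquant {𝒳 : Type*} (h : 𝒳 → 𝒳 → ℝ) (m : ℕ) (δ : ℝ)
    (X : Fin (2 * m) → 𝒳) : ℝ :=
  sInf {d : ℝ | 1 - δ ≤ Demp h m X d}

/-- The first `2m` of `2m+1` i.i.d. observations. -/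
def firstN {𝒳 : Type*} (m : ℕ) (ω : Fin (2 * m + 1) → 𝒳) : Fin (2 * m) → 𝒳 :=
  fun i => ω i.castSucc

/-- The sample with the last observation replaced by the fresh draw. -/
def swapLast {𝒳 : Type*} (m : ℕ) (ω : Fin (2 * m + 1) → 𝒳) : Fin (2 * m) → 𝒳 :=
  fun i => if (i : ℕ) = 2 * m - 1 then ω (Fin.last (2 * m)) else ω i.castSucc

open Set ProbabilityTheory Filter Topology

/-!
Pairing the sample as `(X i, X (i + m))`, `m · D(X, t)` counts the pairs in `{h ≤ t}`, a sum of
`m` i.i.d. Bernoulli(`H t`) variables, so by Chebyshev `|D(X, t) - H t| < η` except with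
probability at most `1 / (4 m η²)`. Since `H` has slope `c > 0` at its `(1 - δ)`-quantile `h_δ`, for
`ε = b / √n` small, `H (h_δ + ε) ≥ 1 - δ + c ε / 2` and `H (h_δ - ε) ≤ 1 - δ - c ε / 2`; off two
events of total probability `2 / (m c² ε²) = γ₂` this forces `d_δ(X) ≤ h_δ + ε` and
`d_δ(X') ≥ h_δ - ε`, and `h_δ + ε ≤ e^{4ε/h_δ} (h_δ - ε)`. Both `X` and `X'` are injective
reindexings of the `n + 1` i.i.d. observations, hence are themselves i.i.d. samples.
-/

theorem nonempty_and_isGLB_of_sInf_pos {S : Set ℝ} (h : 0 < sInf S) :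
    S.Nonempty ∧ IsGLB S (sInf S) := by
  have hne : S.Nonempty := by
    by_contra hS
    rw [not_nonempty_iff_eq_empty.1 hS, Real.sInf_empty] at h
    exact h.false
  have hbdd : BddBelow S := by
    by_contra hS
    rw [Real.sInf_of_not_bddBelow hS] at h
    exact h.false
  exact ⟨hne, isGLB_csInf hne hbdd⟩

theorem eq_of_isGLB_setOf_le {H : ℝ → ℝ} {a q : ℝ} (hne : {t | a ≤ H t}.Nonempty)
    (hq : IsGLB {t | a ≤ H t} q) (hH : ContinuousAt H q) : H q = a := by
  apply le_antisymm
  · have hleft : H '' Iio q ⊆ Iic a := by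
      rintro _ ⟨t, ht, rfl⟩
      by_contra hat
      exact (not_le.2 ht) (hq.1 (show a ≤ H t from (not_le.1 hat).le))
    have := hH.continuousWithinAt.mem_closure_image
      (by rw [closure_Iio' nonempty_Iio]; exact self_mem_Iic)
    exact closure_minimal hleft isClosed_Iic this
  · have := hH.continuousWithinAt.mem_closure_image (hq.mem_closure hne)
    exact closure_minimal (image_subset_iff.2 fun t ht => ht) isClosed_Ici this

theorem HasDerivAt.exists_pos_forall_half_slope {f : ℝ → ℝ} {c x : ℝ} (hf : HasDerivAt f c x)
    (hc : 0 < c) : ∃ r > 0, ∀ ε ∈ Ioo 0 r,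
      f x + c * ε / 2 ≤ f (x + ε) ∧ f (x - ε) ≤ f x - c * ε / 2 := by
  obtain ⟨r, hr, hbound⟩ := Metric.eventually_nhds_iff.1
    ((hasDerivAt_iff_isLittleO.1 hf).bound (half_pos hc))
  refine ⟨r, hr, fun ε ⟨hε, hεr⟩ => ⟨?_, ?_⟩⟩
  · have := hbound (y := x + ε) (by simpa [Real.dist_eq, abs_of_pos hε] using hεr)
    simp only [Real.norm_eq_abs, add_sub_cancel_left, smul_eq_mul, abs_of_pos hε] at this
    linarith [(abs_le.1 this).1]
  · have := hbound (y := x - ε) (by simpa [Real.dist_eq, abs_of_pos hε] using hεr)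
    simp only [Real.norm_eq_abs, sub_sub_cancel_left, smul_eq_mul, abs_neg, abs_of_pos hε] at this
    linarith [(abs_le.1 this).2]

theorem add_le_exp_mul_sub {q ε : ℝ} (hq : 0 < q) (hε : 0 ≤ ε) (hεq : ε ≤ q / 2) :
    q + ε ≤ Real.exp (4 * ε / q) * (q - ε) := by
  have hlin : q + ε ≤ (1 + 4 * ε / q) * (q - ε) := by
    have hsq : 4 * ε ^ 2 / q ≤ 2 * ε := by
      rw [div_le_iff₀ hq]; nlinarith
    have hexpand : (1 + 4 * ε / q) * (q - ε) = q + 3 * ε - 4 * ε ^ 2 / q := by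
      field_simp; ring
    linarith
  calc q + ε ≤ (1 + 4 * ε / q) * (q - ε) := hlin
    _ ≤ Real.exp (4 * ε / q) * (q - ε) := by
      gcongr
      · linarith
      · linarith [Real.add_one_le_exp (4 * ε / q)]

theorem measurePreserving_comp_of_injective {ι κ α : Type*} [Fintype ι] [Fintype κ]
    [MeasurableSpace α] (P : Measure α) [IsProbabilityMeasure P] {e : κ → ι}
    (he : e.Injective) :
    MeasurePreserving (fun ω : ι → α => ω ∘ e)
      (Measure.pi fun _ : ι => P) (Measure.pi fun _ : κ => P) := by
  have hind : iIndepFun (fun j (ω : ι → α) => ω (e j)) (Measure.pi fun _ : ι => P) :=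
    (iIndepFun_pi (X := fun _ : ι => id) fun _ => aemeasurable_id).precomp he
  refine ⟨by fun_prop, ?_⟩
  change Measure.map (fun (ω : ι → α) j => ω (e j)) _ = _
  rw [(iIndepFun_iff_map_fun_eq_pi_map fun j => (measurable_pi_apply (e j)).aemeasurable).1 hind]
  exact congrArg Measure.pi (funext fun j => (measurePreserving_eval _ (e j)).map_eq)

theorem measure_le_abs_avg_indicator_sub_le {α : Type*} [MeasurableSpace α] (Q : Measure α)
    [IsProbabilityMeasure Q] {A : Set α} (hA : MeasurableSet A) {m : ℕ} (hm : 0 < m)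
    {η : ℝ} (hη : 0 < η) :
    (Measure.pi fun _ : Fin m => Q) {Y | η ≤ |(∑ i, A.indicator 1 (Y i)) / m - Q.real A|}
      ≤ ENNReal.ofReal (1 / (4 * m * η ^ 2)) := by
  set μ := Measure.pi fun _ : Fin m => Q
  set f : Fin m → (Fin m → α) → ℝ := fun i Y => A.indicator 1 (Y i)
  have hmR : (0 : ℝ) < m := Nat.cast_pos.2 hm
  have hf_meas : ∀ i, Measurable (f i) :=
    fun i => (measurable_one.indicator hA).comp (measurable_pi_apply i)
  have hf_range : ∀ i Y, f i Y ∈ Icc (0 : ℝ) 1 := fun i Y => by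
    by_cases hY : Y i ∈ A <;> simp [f, hY]
  have hf_mem : ∀ i, MemLp (f i) 2 μ := fun i =>
    memLp_of_bounded (ae_of_all _ (hf_range i)) (hf_meas i).aestronglyMeasurable 2
  have hf_mean : ∀ i, μ[f i] = Q.real A := fun i => by
    change ∫ Y, (Function.eval i ⁻¹' A).indicator 1 Y ∂μ = _
    rw [integral_indicator_one (measurable_pi_apply i hA)]
    exact (measurePreserving_eval (fun _ => Q) i).measureReal_preimage hA.nullMeasurableSet
  have hindep : iIndepFun f μ :=
    iIndepFun_pi (X := fun _ => A.indicator (1 : α → ℝ))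
      fun _ => (measurable_one.indicator hA).aemeasurable
  have hS_mem : MemLp (∑ i, f i) 2 μ := memLp_finsetSum' _ fun i _ => hf_mem i
  have hS_mean : μ[∑ i, f i] = m * Q.real A := by
    simp_rw [Finset.sum_apply]
    rw [integral_finsetSum _ fun i _ => (hf_mem i).integrable one_le_two]
    simp [hf_mean]
  have hS_var : variance (∑ i, f i) μ ≤ m / 4 := by
    rw [IndepFun.variance_sum (fun i _ => hf_mem i) fun i _ j _ hij => hindep.indepFun hij]
    calc _ ≤ ∑ _i : Fin m, ((1 - 0) / 2 : ℝ) ^ 2 := Finset.sum_le_sum fun i _ =>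
          variance_le_sq_of_bounded (ae_of_all _ (hf_range i)) (hf_meas i).aemeasurable
      _ = m / 4 := by simp; ring
  calc μ {Y | η ≤ |(∑ i, A.indicator 1 (Y i)) / m - Q.real A|}
      = μ {Y | m * η ≤ |(∑ i, f i) Y - μ[∑ i, f i]|} := by
        congr 1; ext Y
        rw [mem_ofPred_eq, mem_ofPred_eq, hS_mean, ← mul_le_mul_iff_of_pos_left hmR,
          ← abs_of_pos hmR, ← abs_mul, abs_of_pos hmR, mul_sub, mul_div_cancel₀ _ hmR.ne']
        simp [f]
    _ ≤ ENNReal.ofReal (variance (∑ i, f i) μ / (m * η) ^ 2) :=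
        meas_ge_le_variance_div_sq hS_mem (by positivity)
    _ ≤ ENNReal.ofReal (1 / (4 * m * η ^ 2)) := by
        refine ENNReal.ofReal_le_ofReal ?_
        calc _ ≤ (m / 4) / (m * η) ^ 2 := by gcongr
          _ = _ := by field_simp

def pairUp {𝒳 : Type*} (m : ℕ) (X : Fin (2 * m) → 𝒳) (i : Fin m) : 𝒳 × 𝒳 :=
  (X ⟨i.1, by have := i.isLt; omega⟩, X ⟨i.1 + m, by have := i.isLt; omega⟩)

def pairIndex (m : ℕ) : Fin m ⊕ Fin m → Fin (2 * m) :=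
  Sum.elim (fun i => ⟨i.1, by omega⟩) (fun i => ⟨i.1 + m, by omega⟩)

theorem pairIndex_injective (m : ℕ) : (pairIndex m).Injective := by
  rintro (i | i) (j | j) hij <;> simp [pairIndex, Fin.ext_iff] at hij <;> grind

theorem measurePreserving_pairUp {𝒳 : Type*} [MeasurableSpace 𝒳] (P : Measure 𝒳)
    [IsProbabilityMeasure P] (m : ℕ) :
    MeasurePreserving (pairUp m) (Measure.pi fun _ : Fin (2 * m) => P)
      (Measure.pi fun _ : Fin m => P.prod P) :=
  ((measurePreserving_arrowProdEquivProdArrow 𝒳 𝒳 (Fin m) (fun _ => P) (fun _ => P)).symm.comp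
    (measurePreserving_sumPiEquivProdPi fun _ => P)).comp
    (measurePreserving_comp_of_injective P (pairIndex_injective m))

theorem Demp_eq_sum_indicator_div {𝒳 : Type*} (h : 𝒳 → 𝒳 → ℝ) (m : ℕ)
    (X : Fin (2 * m) → 𝒳) (t : ℝ) :
    Demp h m X t = (∑ i, {p : 𝒳 × 𝒳 | h p.1 p.2 ≤ t}.indicator 1 (pairUp m X i)) / m := by
  rw [Demp, Finset.natCast_card_filter]
  simp only [Set.indicator_apply, pairUp, mem_ofPred_eq, Pi.one_apply]
  ring

theorem Demp_mono {𝒳 : Type*} (h : 𝒳 → 𝒳 → ℝ) (m : ℕ) (X : Fin (2 * m) → 𝒳) :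
    Monotone (Demp h m X) := by
  intro s t hst
  unfold Demp
  gcongr with i

theorem bddBelow_setOf_le_Demp {𝒳 : Type*} (h : 𝒳 → 𝒳 → ℝ) (m : ℕ) (X : Fin (2 * m) → 𝒳)
    {a : ℝ} (ha : 0 < a) : BddBelow {t | a ≤ Demp h m X t} := by
  obtain ⟨L, hL⟩ := (Set.finite_range (Function.uncurry h ∘ pairUp m X)).bddBelow
  refine ⟨L, fun t ht => ?_⟩
  by_contra htL
  have hzero : Demp h m X t = 0 := by
    rw [Demp_eq_sum_indicator_div, Finset.sum_eq_zero, zero_div]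
    intro i _
    refine indicator_of_notMem (fun hi => htL ?_) _
    exact (hL ⟨i, rfl⟩).trans hi
  exact (ha.trans_le (hzero ▸ ht)).false

theorem exists_Demp_eq_one {𝒳 : Type*} (h : 𝒳 → 𝒳 → ℝ) {m : ℕ} (hm : 0 < m)
    (X : Fin (2 * m) → 𝒳) : ∃ t, Demp h m X t = 1 := by
  obtain ⟨M, hM⟩ := (Set.finite_range (Function.uncurry h ∘ pairUp m X)).bddAbove
  refine ⟨M, ?_⟩
  have hall : ∀ i, pairUp m X i ∈ {p : 𝒳 × 𝒳 | h p.1 p.2 ≤ M} := fun i => hM ⟨i, rfl⟩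
  simp [Demp_eq_sum_indicator_div, indicator_of_mem (hall _), hm.ne']

theorem dquant_le_of_le_Demp {𝒳 : Type*} (h : 𝒳 → 𝒳 → ℝ) (m : ℕ) (X : Fin (2 * m) → 𝒳)
    {δ t : ℝ} (hδ : δ < 1) (ht : 1 - δ ≤ Demp h m X t) : dquant h m δ X ≤ t :=
  csInf_le (bddBelow_setOf_le_Demp h m X (by linarith)) ht

theorem le_dquant_of_Demp_lt {𝒳 : Type*} (h : 𝒳 → 𝒳 → ℝ) {m : ℕ} (hm : 0 < m)
    (X : Fin (2 * m) → 𝒳) {δ t : ℝ} (hδ : 0 ≤ δ) (ht : Demp h m X t < 1 - δ) :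
    t ≤ dquant h m δ X := by
  obtain ⟨M, hM⟩ := exists_Demp_eq_one h hm X
  refine le_csInf ⟨M, by simp only [mem_ofPred_eq, hM]; linarith⟩ fun d hd => ?_
  by_contra hdt
  exact (ht.trans_le hd).not_ge (Demp_mono h m X (not_le.1 hdt).le)

theorem measure_le_abs_Demp_comp_sub_le {ι 𝒳 : Type*} [Fintype ι] [MeasurableSpace 𝒳]
    (P : Measure 𝒳) [IsProbabilityMeasure P] {h : 𝒳 → 𝒳 → ℝ}
    (hmeas : Measurable (Function.uncurry h)) {m : ℕ} (hm : 0 < m) {e : Fin (2 * m) → ι}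
    (he : e.Injective) (t : ℝ) {η : ℝ} (hη : 0 < η) :
    (Measure.pi fun _ : ι => P)
        {ω | η ≤ |Demp h m (ω ∘ e) t - (P.prod P).real {p | h p.1 p.2 ≤ t}|}
      ≤ ENNReal.ofReal (1 / (4 * m * η ^ 2)) := by
  simp_rw [Demp_eq_sum_indicator_div]
  exact (((measurePreserving_pairUp P m).comp
    (measurePreserving_comp_of_injective P he)).measure_preimage_le _).trans
    (measure_le_abs_avg_indicator_sub_le (P.prod P) (hmeas measurableSet_Iic) hm hη)

def swapLastIndex (m : ℕ) (i : Fin (2 * m)) : Fin (2 * m + 1) :=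
  if (i : ℕ) = 2 * m - 1 then Fin.last (2 * m) else i.castSucc

theorem swapLastIndex_injective (m : ℕ) : (swapLastIndex m).Injective := by
  intro i j hij
  simp only [swapLastIndex] at hij
  split_ifs at hij <;> simp [Fin.ext_iff] at hij <;> omega

theorem swapLast_eq_comp {𝒳 : Type*} (m : ℕ) (ω : Fin (2 * m + 1) → 𝒳) :
    swapLast m ω = ω ∘ swapLastIndex m := by
  funext i
  simp only [swapLast, swapLastIndex, Function.comp_apply, apply_ite ω]

theorem ofReal_one_sub_le_measure_dquant_firstN_le {𝒳 : Type*} [MeasurableSpace 𝒳]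
    (P : Measure 𝒳) [IsProbabilityMeasure P] {h : 𝒳 → 𝒳 → ℝ}
    (hmeas : Measurable (Function.uncurry h)) {δ : ℝ} (hδ0 : 0 ≤ δ) (hδ1 : δ < 1) {m : ℕ}
    (hm : 0 < m) {η t₁ t₂ K : ℝ} (hη : 0 < η)
    (ht₁ : 1 - δ + η ≤ (P.prod P).real {p | h p.1 p.2 ≤ t₁})
    (ht₂ : (P.prod P).real {p | h p.1 p.2 ≤ t₂} ≤ 1 - δ - η) (hK : 0 ≤ K) (hKt : t₁ ≤ K * t₂) :
    ENNReal.ofReal (1 - 1 / (2 * m * η ^ 2)) ≤ (Measure.pi fun _ : Fin (2 * m + 1) => P)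
      {ω | dquant h m δ (firstN m ω) ≤ K * dquant h m δ (swapLast m ω)} := by
  set μ := Measure.pi fun _ : Fin (2 * m + 1) => P
  set bad₁ := {ω : Fin (2 * m + 1) → 𝒳 |
    η ≤ |Demp h m (ω ∘ Fin.castSucc) t₁ - (P.prod P).real {p | h p.1 p.2 ≤ t₁}|}
  set bad₂ := {ω : Fin (2 * m + 1) → 𝒳 |
    η ≤ |Demp h m (ω ∘ swapLastIndex m) t₂ - (P.prod P).real {p | h p.1 p.2 ≤ t₂}|}
  have hgood : (bad₁ ∪ bad₂)ᶜ ⊆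
      {ω | dquant h m δ (firstN m ω) ≤ K * dquant h m δ (swapLast m ω)} := by
    intro ω hω
    simp only [bad₁, bad₂, mem_compl_iff, mem_union, not_or, mem_ofPred_eq, not_le,
      abs_lt] at hω
    obtain ⟨⟨h₁, -⟩, ⟨-, h₂⟩⟩ := hω
    calc dquant h m δ (firstN m ω) ≤ t₁ :=
          dquant_le_of_le_Demp h m (ω ∘ Fin.castSucc) hδ1 (by linarith)
      _ ≤ K * t₂ := hKt
      _ ≤ K * dquant h m δ (swapLast m ω) := by
        rw [swapLast_eq_comp]
        exact mul_le_mul_of_nonneg_left (le_dquant_of_Demp_lt h hm _ hδ0 (by linarith)) hK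
  have hbad : μ (bad₁ ∪ bad₂) ≤ ENNReal.ofReal (1 / (2 * m * η ^ 2)) :=
    calc μ (bad₁ ∪ bad₂) ≤ μ bad₁ + μ bad₂ := measure_union_le _ _
      _ ≤ ENNReal.ofReal (1 / (4 * m * η ^ 2)) + ENNReal.ofReal (1 / (4 * m * η ^ 2)) :=
        add_le_add
          (measure_le_abs_Demp_comp_sub_le P hmeas hm (Fin.castSucc_injective _) t₁ hη)
          (measure_le_abs_Demp_comp_sub_le P hmeas hm (swapLastIndex_injective m) t₂ hη)
      _ = ENNReal.ofReal (1 / (2 * m * η ^ 2)) := by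
        rw [← ENNReal.ofReal_add (by positivity) (by positivity)]
        congr 1
        field_simp
        ring
  calc ENNReal.ofReal (1 - 1 / (2 * m * η ^ 2))
      = 1 - ENNReal.ofReal (1 / (2 * m * η ^ 2)) := by
        rw [ENNReal.ofReal_sub _ (by positivity), ENNReal.ofReal_one]
    _ ≤ 1 - μ (bad₁ ∪ bad₂) := tsub_le_tsub_left hbad 1
    _ ≤ μ (bad₁ ∪ bad₂)ᶜ := by
      rw [tsub_le_iff_left, ← measure_univ (μ := μ)]
      exact measure_univ_le_add_compl _
    _ ≤ _ := measure_mono hgood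

theorem stmt18_general {𝒳 : Type*} [MeasurableSpace 𝒳] (P : Measure 𝒳) [IsProbabilityMeasure P]
    (h : 𝒳 → 𝒳 → ℝ) (hmeas : Measurable (Function.uncurry h))
    (δ : ℝ) (hδ0 : 0 < δ) (hδ1 : δ < 1)
    (H : ℝ → ℝ) (hH : H = fun t => ((P.prod P) {p | h p.1 p.2 ≤ t}).toReal)
    (hq : ℝ) (hhq : hq = sInf {t | 1 - δ ≤ H t}) (hqpos : 0 < hq)
    (hdens : ∃ c : ℝ, 0 < c ∧ HasDerivAt H c hq) :
    ∀ γ2 : ℝ, 0 < γ2 → ∃ C : ℝ, ∃ N : ℕ, ∀ m : ℕ, N ≤ m →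
      (Measure.pi fun _ : Fin (2 * m + 1) => P)
          {ω | dquant h m δ (firstN m ω) ≤
            Real.exp (C / Real.sqrt (2 * m)) * dquant h m δ (swapLast m ω)}
        ≥ ENNReal.ofReal (1 - γ2) := by
  intro γ2 hγ2
  obtain ⟨c, hc, hderiv⟩ := hdens
  obtain ⟨hne, hglb⟩ := nonempty_and_isGLB_of_sInf_pos (hhq ▸ hqpos)
  have hHq : H hq = 1 - δ := eq_of_isGLB_setOf_le hne (hhq ▸ hglb) hderiv.continuousAt
  have hHreal : ∀ t, H t = (P.prod P).real {p | h p.1 p.2 ≤ t} := fun t => by rw [hH]; rfl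
  obtain ⟨r, hr, hslope⟩ := hderiv.exists_pos_forall_half_slope hc
  -- `b` makes the Chebyshev bound `1 / (2 m η²)` with `η = c ε / 2` equal to `γ2`.
  set b := 2 / (c * Real.sqrt γ2)
  have hε : Tendsto (fun m : ℕ => b / Real.sqrt (2 * m)) atTop (𝓝 0) :=
    tendsto_const_nhds.div_atTop
      (Real.tendsto_sqrt_atTop.comp (tendsto_natCast_atTop_atTop.const_mul_atTop two_pos))
  obtain ⟨N, hN⟩ := eventually_atTop.1 ((hε.eventually
    (gt_mem_nhds (lt_min hr (half_pos hqpos)))).and (eventually_gt_atTop 0))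
  refine ⟨4 * b / hq, N, fun m hm => ?_⟩
  obtain ⟨hεm, hm0⟩ := hN m hm
  set ε := b / Real.sqrt (2 * m)
  have hε0 : 0 < ε := by positivity
  obtain ⟨h₁, h₂⟩ := hslope ε ⟨hε0, hεm.trans_le (min_le_left _ _)⟩
  have hγ : 1 / (2 * m * (c * ε / 2) ^ 2) = γ2 := by
    simp only [ε, b, div_pow, mul_pow, Real.sq_sqrt hγ2.le,
      Real.sq_sqrt (by positivity : (0 : ℝ) ≤ 2 * m)]
    field_simp
  have key := ofReal_one_sub_le_measure_dquant_firstN_le P hmeas hδ0.le hδ1 hm0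
    (η := c * ε / 2) (by positivity) (by rw [← hHreal]; linarith) (by rw [← hHreal]; linarith)
    (Real.exp_pos _).le (add_le_exp_mul_sub hqpos hε0.le (hεm.trans_le (min_le_right _ _)).le)
  rw [hγ] at key
  rwa [show 4 * b / hq / Real.sqrt (2 * m) = 4 * ε / hq by ring]

/-- **Stability of the empirical sensitivity quantile.** Let `H` be the CDF of
`h(x,x')` for independent draws from `P`, continuous with positive derivative
(density) at its `(1-δ)`-quantile `h_δ > 0`. Then `d_δ(X)/d_δ(X') ≤ 1 + O_P(n^{-1/2})`
for samples `X, X'` differing in one element: for every `γ₂ > 0` there are a constant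
`C` and `N` such that for all `n = 2m ≥ N`,
`P(d_δ(X) ≤ e^{β_n} d_δ(X')) ≥ 1 - γ₂` with `β_n = C·n^{-1/2}`. -/
theorem stmt18 {𝒳 : Type*} [MeasurableSpace 𝒳] (P : Measure 𝒳) [IsProbabilityMeasure P]
    (h : 𝒳 → 𝒳 → ℝ) (hmeas : Measurable (Function.uncurry h)) (hnn : ∀ x y, 0 ≤ h x y)
    (δ : ℝ) (hδ0 : 0 < δ) (hδ1 : δ < 1)
    (H : ℝ → ℝ) (hH : H = fun t => ((P.prod P) {p | h p.1 p.2 ≤ t}).toReal)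
    (hHcont : Continuous H)
    (hq : ℝ) (hhq : hq = sInf {t | 1 - δ ≤ H t}) (hqpos : 0 < hq)
    (hdens : ∃ c : ℝ, 0 < c ∧ HasDerivAt H c hq) :
    ∀ γ2 : ℝ, 0 < γ2 → ∃ C : ℝ, ∃ N : ℕ, ∀ m : ℕ, N ≤ m →
      (Measure.pi fun _ : Fin (2 * m + 1) => P)
          {ω | dquant h m δ (firstN m ω) ≤
            Real.exp (C / Real.sqrt (2 * m)) * dquant h m δ (swapLast m ω)}
        ≥ ENNReal.ofReal (1 - γ2) :=
  stmt18_general P h hmeas δ hδ0 hδ1 H hH hq hhq hqpos hdens
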